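/- Consider the generic asynchronous Q-learning iteration with adaptive stepsizes: given sequences (s_k, a_k)_{k≥1} in S×A, (s'_k)_{k≥1} in S, shifts (c_k)_{k≥1} in ℝ, constants α > 0 and h > 0, reward |R(s,a)| ≤ 1 for all (s,a), and an initial Q_1 : S×A → ℝ, define N_k(s,a) = Σ_{i=1}^k 1{(s_i,a_i)=(s,a)} (with N_0(s,a) = 0), N_{k,min} = min_{(s,a)} N_k(s,a), and Q_{k+1}(s,a) = Q_k(s,a) + (α/(N_k(s,a)+h))·1{(s,a)=(s_k,a_k)}·(R(s_k,a_k) + max_{a'∈A} Q_k(s'_k,a') − Q_k(s_k,a_k)) + c_k. Then for all integers k ≥ k1 ≥ 1, p_span(Q_k − Q_{k1}) ≤ f(α·(k − k1)/(N_{k1−1,min} + 1 + h))·(p_span(Q_{k1}) + 1), where f(x) = x·e^x. -/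
import Mathlib


/-- The span seminorm of a vector over a finite nonempty index set:
`p_span(x) = (max_i x_i - min_i x_i) / 2`. -/
noncomputable def pspan {I : Type*} [Fintype I] [Nonempty I] (x : I → ℝ) : ℝ :=
  ((⨆ i, x i) - ⨅ i, x i) / 2

/-- The number of visits `N_k(s,a) = Σ_{i=1}^k 1{(s_i,a_i) = (s,a)}` of a state-action
trajectory to the pair `(s,a)` during the first `k` iterations (`N_0 = 0`). -/
def visits {S A : Type*} [DecidableEq S] [DecidableEq A]
    (sa : ℕ → S × A) (k : ℕ) (q : S × A) : ℕ :=
  ((Finset.Icc 1 k).filter (fun i => sa i = q)).card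

section Aux

variable {I : Type*} [Fintype I] [Nonempty I]

lemma le_ciSup'' (x : I → ℝ) (i : I) : x i ≤ ⨆ j, x j :=
  le_ciSup (Set.Finite.bddAbove (Set.finite_range x)) i

lemma ciInf_le'' (x : I → ℝ) (i : I) : (⨅ j, x j) ≤ x i :=
  ciInf_le (Set.Finite.bddBelow (Set.finite_range x)) i

lemma pspan_nonneg (x : I → ℝ) : 0 ≤ pspan x := by
  obtain ⟨i⟩ := ‹Nonempty I›
  have h1 := (ciInf_le'' x i).trans (le_ciSup'' x i)
  unfold pspan; linarith

lemma pspan_add_le (x y : I → ℝ) : pspan (fun i => x i + y i) ≤ pspan x + pspan y := by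
  have h1 : (⨆ i, x i + y i) ≤ (⨆ i, x i) + ⨆ i, y i :=
    ciSup_le fun i => add_le_add (le_ciSup'' x i) (le_ciSup'' y i)
  have h2 : (⨅ i, x i) + (⨅ i, y i) ≤ ⨅ i, x i + y i :=
    le_ciInf fun i => add_le_add (ciInf_le'' x i) (ciInf_le'' y i)
  unfold pspan; linarith

lemma pspan_const (b : ℝ) : pspan (fun _ : I => b) = 0 := by
  unfold pspan
  rw [ciSup_const, ciInf_const]; ring

lemma pspan_single (g : I → ℝ) (i0 : I) (hg : ∀ i, i ≠ i0 → g i = 0) :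
    pspan g ≤ |g i0| / 2 := by
  have h1 : (⨆ i, g i) ≤ max (g i0) 0 := ciSup_le fun i => by
    by_cases hi : i = i0
    · subst hi; exact le_max_left _ _
    · rw [hg i hi]; exact le_max_right _ _
  have h2 : min (g i0) 0 ≤ ⨅ i, g i := le_ciInf fun i => by
    by_cases hi : i = i0
    · subst hi; exact min_le_left _ _
    · rw [hg i hi]; exact min_le_right _ _
  have h3 : max (g i0) 0 - min (g i0) 0 = |g i0| := by
    rw [max_sub_min_eq_abs]
    simp [abs_sub_comm]
  unfold pspan; linarith

end Aux

lemma visits_mono {S A : Type*} [DecidableEq S] [DecidableEq A]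
    (sa : ℕ → S × A) {k l : ℕ} (hkl : k ≤ l) (q : S × A) :
    visits sa k q ≤ visits sa l q :=
  Finset.card_le_card (Finset.filter_subset_filter _ (Finset.Icc_subset_Icc_right hkl))

lemma visits_succ_self {S A : Type*} [DecidableEq S] [DecidableEq A]
    (sa : ℕ → S × A) {k : ℕ} (hk : 1 ≤ k) :
    visits sa (k - 1) (sa k) + 1 ≤ visits sa k (sa k) := by
  have hsub : ((Finset.Icc 1 (k - 1)).filter (fun i => sa i = sa k)) ⊆
      ((Finset.Icc 1 k).filter (fun i => sa i = sa k)) :=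
    Finset.filter_subset_filter _ (Finset.Icc_subset_Icc_right (Nat.sub_le k 1))
  have hmem : k ∈ ((Finset.Icc 1 k).filter (fun i => sa i = sa k)) := by
    simp [Finset.mem_filter, Finset.mem_Icc, hk]
  have hnot : k ∉ ((Finset.Icc 1 (k - 1)).filter (fun i => sa i = sa k)) := by
    simp only [Finset.mem_filter, Finset.mem_Icc]
    rintro ⟨⟨-, hle⟩, -⟩
    omega
  have : ((Finset.Icc 1 (k - 1)).filter (fun i => sa i = sa k)) ⊂
      ((Finset.Icc 1 k).filter (fun i => sa i = sa k)) :=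
    (Finset.ssubset_iff_of_subset hsub).2 ⟨k, hmem, hnot⟩
  exact Nat.succ_le_of_lt (Finset.card_lt_card this)

lemma exp_sub_one_le (t : ℝ) : Real.exp t - 1 ≤ t * Real.exp t := by
  have h := Real.add_one_le_exp (-t)
  rw [Real.exp_neg] at h
  have hpos := Real.exp_pos t
  have hinv : (Real.exp t)⁻¹ * Real.exp t = 1 := inv_mul_cancel₀ (ne_of_gt hpos)
  nlinarith

/-- Difference bound for asynchronous Q-learning iterates with adaptive stepsizes:
for `k ≥ k1 ≥ 1`,
`p_span(Q_k - Q_{k1}) ≤ f(α(k - k1)/(N_{k1-1,min} + 1 + h))·(p_span(Q_{k1}) + 1)`,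
where `f(x) = x·e^x` and `N_{k,min} = min_{(s,a)} N_k(s,a)`. -/
theorem qlearning_difference_bound {S A : Type*} [Fintype S] [Fintype A] [Nonempty S]
    [Nonempty A] [DecidableEq S] [DecidableEq A]
    (R : S × A → ℝ) (hR : ∀ sa, |R sa| ≤ 1)
    (sa : ℕ → S × A) (s' : ℕ → S) (c : ℕ → ℝ)
    (α h : ℝ) (hα : 0 < α) (hh : 0 < h)
    (Q : ℕ → S × A → ℝ)
    (hstep : ∀ k, 1 ≤ k → ∀ q : S × A,
      Q (k + 1) q = Q k q
        + (α / ((visits sa k q : ℝ) + h)) * (if q = sa k then (1 : ℝ) else 0) *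
            (R (sa k) + (⨆ a' : A, Q k (s' k, a')) - Q k (sa k))
        + c k) :
    ∀ k1 k : ℕ, 1 ≤ k1 → k1 ≤ k →
      pspan (fun q => Q k q - Q k1 q) ≤
        (α * ((k : ℝ) - (k1 : ℝ)) /
              ((⨅ q : S × A, (visits sa (k1 - 1) q : ℝ)) + 1 + h)) *
          Real.exp (α * ((k : ℝ) - (k1 : ℝ)) /
              ((⨅ q : S × A, (visits sa (k1 - 1) q : ℝ)) + 1 + h)) *
          (pspan (Q k1) + 1) := by
  intro k1 k hk1 hk1k
  set d : ℝ := (⨅ q : S × A, (visits sa (k1 - 1) q : ℝ)) + 1 + h with hd_def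
  have hinf_nonneg : (0 : ℝ) ≤ ⨅ q : S × A, (visits sa (k1 - 1) q : ℝ) :=
    le_ciInf fun q => Nat.cast_nonneg _
  have hd0 : 0 < d := by rw [hd_def]; linarith
  set β : ℝ := α / d with hβ_def
  have hβ0 : 0 < β := div_pos hα hd0
  set P : ℝ := pspan (Q k1) + 1 with hP_def
  have hP0 : 0 ≤ P := by
    have := pspan_nonneg (Q k1); rw [hP_def]; linarith
  -- one-step recursion
  have key : ∀ m : ℕ, k1 ≤ m →
      pspan (fun q => Q (m + 1) q - Q k1 q) ≤
        (1 + β) * pspan (fun q => Q m q - Q k1 q) + β * P := by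
    intro m hm
    have hm1 : 1 ≤ m := le_trans hk1 hm
    set T : ℝ := R (sa m) + (⨆ a' : A, Q m (s' m, a')) - Q m (sa m) with hT_def
    set g : S × A → ℝ :=
      fun q => (α / ((visits sa m q : ℝ) + h)) * (if q = sa m then (1 : ℝ) else 0) * T
      with hg_def
    have hdecomp : ∀ q, Q (m + 1) q - Q k1 q = (Q m q - Q k1 q) + (g q + c m) := by
      intro q
      rw [hstep m hm1 q, hg_def]
      ring
    have hsplit : pspan (fun q => Q (m + 1) q - Q k1 q) ≤
        pspan (fun q => Q m q - Q k1 q) + pspan (fun q => g q + c m) := by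
      calc pspan (fun q => Q (m + 1) q - Q k1 q)
          = pspan (fun q => (Q m q - Q k1 q) + (g q + c m)) := by
            congr 1; funext q; exact hdecomp q
        _ ≤ _ := pspan_add_le _ _
    have hsplit2 : pspan (fun q : S × A => g q + c m) ≤ pspan g := by
      have := pspan_add_le g (fun _ : S × A => c m)
      rw [pspan_const] at this
      simpa using this
    -- bound on |T|
    have hspan : (⨆ q, Q m q) - (⨅ q, Q m q) = 2 * pspan (Q m) := by
      unfold pspan; ring
    have hTub : T ≤ 1 + 2 * pspan (Q m) := by
      have h1 : (⨆ a' : A, Q m (s' m, a')) ≤ ⨆ q, Q m q :=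
        ciSup_le fun a' => le_ciSup'' (Q m) (s' m, a')
      have h2 : (⨅ q, Q m q) ≤ Q m (sa m) := ciInf_le'' (Q m) (sa m)
      have h3 := (abs_le.mp (hR (sa m))).2
      rw [hT_def]; linarith [hspan]
    have hTlb : -(1 + 2 * pspan (Q m)) ≤ T := by
      have h1 : (⨅ q, Q m q) ≤ ⨆ a' : A, Q m (s' m, a') := by
        obtain ⟨a0⟩ := ‹Nonempty A›
        exact (ciInf_le'' (Q m) (s' m, a0)).trans
          (le_ciSup'' (fun a' : A => Q m (s' m, a')) a0)
      have h2 : Q m (sa m) ≤ ⨆ q, Q m q := le_ciSup'' (Q m) (sa m)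
      have h3 := (abs_le.mp (hR (sa m))).1
      rw [hT_def]; linarith [hspan]
    have hTabs : |T| ≤ 1 + 2 * pspan (Q m) := abs_le.mpr ⟨hTlb, hTub⟩
    -- stepsize bound
    have hcoeff : α / ((visits sa m (sa m) : ℝ) + h) ≤ β := by
      have hv : (⨅ q : S × A, (visits sa (k1 - 1) q : ℝ)) + 1 ≤
          (visits sa m (sa m) : ℝ) := by
        have h1 : (⨅ q : S × A, (visits sa (k1 - 1) q : ℝ)) ≤
            (visits sa (k1 - 1) (sa m) : ℝ) :=
          ciInf_le'' (fun q : S × A => (visits sa (k1 - 1) q : ℝ)) (sa m)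
        have h2 : visits sa (k1 - 1) (sa m) + 1 ≤ visits sa m (sa m) := by
          have := visits_succ_self sa hm1
          have hmono := visits_mono sa (Nat.sub_le_sub_right hm 1) (sa m)
          omega
        have h2' : (visits sa (k1 - 1) (sa m) : ℝ) + 1 ≤ (visits sa m (sa m) : ℝ) := by
          exact_mod_cast h2
        linarith
      have hdle : d ≤ (visits sa m (sa m) : ℝ) + h := by rw [hd_def]; linarith
      rw [hβ_def]
      exact div_le_div_of_nonneg_left (le_of_lt hα) hd0 hdle
    have hcoeff0 : 0 ≤ α / ((visits sa m (sa m) : ℝ) + h) := by positivity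
    -- bound on pspan g
    have hg_supp : ∀ q, q ≠ sa m → g q = 0 := by
      intro q hq
      rw [hg_def]
      simp [hq]
    have hval : g (sa m) = (α / ((visits sa m (sa m) : ℝ) + h)) * T := by
      simp [hg_def]
    have hgval : |g (sa m)| = (α / ((visits sa m (sa m) : ℝ) + h)) * |T| := by
      rw [hval, abs_mul, abs_of_nonneg hcoeff0]
    have hpg : pspan g ≤ β * (1 + 2 * pspan (Q m)) / 2 := by
      have h1 := pspan_single g (sa m) hg_supp
      have h2 : |g (sa m)| ≤ β * (1 + 2 * pspan (Q m)) := by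
        rw [hgval]
        have hTnn : (0:ℝ) ≤ |T| := abs_nonneg _
        calc (α / ((visits sa m (sa m) : ℝ) + h)) * |T| ≤ β * |T| :=
              mul_le_mul_of_nonneg_right hcoeff hTnn
          _ ≤ β * (1 + 2 * pspan (Q m)) :=
              mul_le_mul_of_nonneg_left hTabs (le_of_lt hβ0)
      linarith
    -- pspan Q m ≤ pspan D_m + pspan Q k1
    have hQm : pspan (Q m) ≤ pspan (fun q => Q m q - Q k1 q) + pspan (Q k1) := by
      have := pspan_add_le (fun q => Q m q - Q k1 q) (Q k1)
      simpa using this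
    have hppos := pspan_nonneg (fun q : S × A => Q m q - Q k1 q)
    calc pspan (fun q => Q (m + 1) q - Q k1 q)
        ≤ pspan (fun q => Q m q - Q k1 q) + pspan (fun q => g q + c m) := hsplit
      _ ≤ pspan (fun q => Q m q - Q k1 q) + pspan g := by linarith
      _ ≤ (1 + β) * pspan (fun q => Q m q - Q k1 q) + β * P := by
          rw [hP_def]; nlinarith [hQm, hpg, hβ0.le]
  -- induction
  have ind : ∀ n : ℕ, pspan (fun q => Q (k1 + n) q - Q k1 q) ≤ ((1 + β) ^ n - 1) * P := by
    intro n
    induction n with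
    | zero =>
      simp only [Nat.add_zero, sub_self, pow_zero]
      rw [pspan_const]
      simp
    | succ n ih =>
      have hk' := key (k1 + n) (Nat.le_add_right k1 n)
      have h1β : (0:ℝ) ≤ 1 + β := by linarith
      calc pspan (fun q => Q (k1 + (n + 1)) q - Q k1 q)
          = pspan (fun q => Q ((k1 + n) + 1) q - Q k1 q) := by
            congr 2
        _ ≤ (1 + β) * pspan (fun q => Q (k1 + n) q - Q k1 q) + β * P := hk'
        _ ≤ (1 + β) * (((1 + β) ^ n - 1) * P) + β * P := by
            have := mul_le_mul_of_nonneg_left ih h1β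
            linarith
        _ = ((1 + β) ^ (n + 1) - 1) * P := by ring
  -- conclusion
  set n : ℕ := k - k1 with hn_def
  have hk_eq : k = k1 + n := by omega
  have hcast : (k : ℝ) - (k1 : ℝ) = (n : ℝ) := by
    rw [hn_def]
    push_cast [Nat.cast_sub hk1k]
    ring
  have hx_eq : α * ((k : ℝ) - (k1 : ℝ)) / d = (n : ℝ) * β := by
    rw [hcast, hβ_def]; ring
  have hgrow : ((1 + β) ^ n - 1) ≤ ((n : ℝ) * β) * Real.exp ((n : ℝ) * β) := by
    have h1 : (1 + β) ^ n ≤ Real.exp ((n : ℝ) * β) := by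
      have h2 : 1 + β ≤ Real.exp β := by
        have := Real.add_one_le_exp β; linarith
      calc (1 + β) ^ n ≤ (Real.exp β) ^ n :=
            pow_le_pow_left₀ (by linarith) h2 n
        _ = Real.exp ((n : ℝ) * β) := (Real.exp_nat_mul β n).symm
    have h3 := exp_sub_one_le ((n : ℝ) * β)
    linarith
  have final : pspan (fun q => Q k q - Q k1 q) ≤ (((n : ℝ) * β) * Real.exp ((n : ℝ) * β)) * P := by
    calc pspan (fun q => Q k q - Q k1 q)
        = pspan (fun q => Q (k1 + n) q - Q k1 q) := by rw [← hk_eq]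
      _ ≤ ((1 + β) ^ n - 1) * P := ind n
      _ ≤ (((n : ℝ) * β) * Real.exp ((n : ℝ) * β)) * P :=
          mul_le_mul_of_nonneg_right hgrow hP0
  rw [hx_eq]
  exact final
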